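/- Let n ≥ 3, let g, f be formal power series over ℤ/3ℤ with f(0) = 0 admitting an A-sequence (there is A over ℤ/3ℤ with A(0) ≠ 0 and f = z·A(f)), and let 1 ≤ i < j ≤ 3. Then in the oriented Riordan graph G_n^σ(g,f) there are no arcs between any vertex u ∈ V_i and any vertex v ∈ V_j (i.e. for all u ∈ V_i, v ∈ V_j one has [z^{max(u,v)−2}] g f^{min(u,v)−1} = 0) if and only if both: [z^{3m+i−2}] g f^{j−1} = 0 for all integers m ≥ 1 with 3m+i ≤ n, and [z^{3(m−1)+j−2}] g f^{i−1} = 0 for all integers m ≥ 1 with 3(m−1)+j ≤ n. -/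

import Mathlib

/-!
Write `r(a, b) = [z^{a-2}] g f^{b-1}` for `a > b ≥ 1`. In characteristic `p` Frobenius gives
`f^p = f(z^p)`, so for `b > p` the factorisation `g f^{b-1} = (g f^{b-1-p}) f^p` expresses
`r(a, b)` as a combination of the entries `r(a - ps, b - p)` with `s ≥ 1`; these stay below the
diagonal, or vanish because `f^{b-1-p}` has order `b-1-p`. The move preserves both residues
mod `p`, so all entries of a pair of residue classes vanish as soon as those whose smaller
vertex is at most `p` do. For `p = 3` and the classes `V_i`, `V_j` these are exactly the two
families of the right-hand side, with smaller vertex `i` or `j`.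
-/

open PowerSeries

/-- Substitution `A(f)` of a power series `f` into a power series `A`.
When `f(0) = 0`, the coefficient of `z^n` in `A(f)` only involves `f^k` for `k ≤ n`
(since `f^k` has order `≥ k`), so the finite sum below is the usual composition. -/
noncomputable def psComp {R : Type*} [CommRing R] (A f : PowerSeries R) : PowerSeries R :=
  PowerSeries.mk fun n => ∑ k ∈ Finset.range (n + 1), coeff k A * coeff n (f ^ k)

namespace PowerSeries

variable {R : Type*} [CommRing R]

theorem coeff_pow_eq_zero_of_not_dvd (p : ℕ) [ExpChar R p] (φ : R⟦X⟧) {m : ℕ} (hm : ¬ p ∣ m) :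
    coeff m (φ ^ p) = 0 := by
  have hp : p ≠ 0 := expChar_ne_zero R p
  rw [← MvPowerSeries.map_frobenius_expand p hp]
  exact (coeff_map (frobenius R p) m (expand p hp φ)).trans
    (by rw [coeff_expand_of_not_dvd p hp φ hm, map_zero])

theorem coeff_mul_pow_eq_zero_of_lt {g f : R⟦X⟧} (hf : constantCoeff f = 0) {N k : ℕ}
    (hNk : N < k) : coeff N (g * f ^ k) = 0 :=
  X_pow_dvd_iff.mp (Dvd.dvd.mul_left (pow_dvd_pow_of_dvd (X_dvd_iff.mpr hf) k) g) N hNk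

theorem coeff_mul_pow_add_eq_zero (p : ℕ) [ExpChar R p] {g f : R⟦X⟧}
    (hf : constantCoeff f = 0) {N k : ℕ}
    (h : ∀ s, 1 ≤ s → k + p * s ≤ N → coeff (N - p * s) (g * f ^ k) = 0) :
    coeff N (g * f ^ (k + p)) = 0 := by
  rw [pow_add, ← mul_assoc, coeff_mul]
  refine Finset.sum_eq_zero fun ⟨a, b⟩ hab => ?_
  rw [Finset.HasAntidiagonal.mem_antidiagonal] at hab
  by_cases hb : p ∣ b
  · obtain ⟨s, rfl⟩ := hb
    rcases Nat.eq_zero_or_pos s with rfl | hs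
    · rw [mul_zero, coeff_zero_eq_constantCoeff_apply, map_pow, hf,
        zero_pow (expChar_ne_zero R p), mul_zero]
    · by_cases hka : k ≤ a
      · rw [show a = N - p * s by omega, h s hs (by omega), zero_mul]
      · rw [coeff_mul_pow_eq_zero_of_lt hf (by omega), zero_mul]
  · rw [coeff_pow_eq_zero_of_not_dvd p f hb, mul_zero]

theorem coeff_mul_pow_eq_zero_of_residues (p : ℕ) [ExpChar R p] {g f : R⟦X⟧}
    (hf : constantCoeff f = 0) (n α β : ℕ)
    (hbase : ∀ a b, b < a → a ≤ n → 1 ≤ b → b ≤ p → a % p = α → b % p = β →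
      coeff (a - 2) (g * f ^ (b - 1)) = 0)
    (a b : ℕ) (hba : b < a) (han : a ≤ n) (hb : 1 ≤ b) (ha : a % p = α) (hb' : b % p = β) :
    coeff (a - 2) (g * f ^ (b - 1)) = 0 := by
  have hp : p ≠ 0 := expChar_ne_zero R p
  induction b using Nat.strong_induction_on generalizing a with
  | _ b ih =>
    by_cases hbp : b ≤ p
    · exact hbase a b hba han hb hbp ha hb'
    rw [show b - 1 = (b - p - 1) + p by omega]
    refine coeff_mul_pow_add_eq_zero p hf fun s hs hle => ?_
    have hred := ih (b - p) (by omega) (a - p * s) (by omega) (by omega) (by omega)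
      (by rw [Nat.sub_mul_mod (by omega), ha]) (by rw [← Nat.mod_eq_sub_mod (by omega), hb'])
    rwa [show a - p * s - 2 = a - 2 - p * s by omega] at hred

end PowerSeries

theorem no_arcs_between_parts_iff_general (n : ℕ)
    (g f : PowerSeries (ZMod 3))
    (hf : constantCoeff f = 0)
    (i j : ℕ) (hi : 1 ≤ i) (hij : i < j) (hj : j ≤ 3) :
    (∀ u v : ℕ, 1 ≤ u → u ≤ n → 1 ≤ v → v ≤ n → u % 3 = i % 3 → v % 3 = j % 3 →
        coeff (max u v - 2) (g * f ^ (min u v - 1)) = 0) ↔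
    ((∀ m : ℕ, 1 ≤ m → 3 * m + i ≤ n →
        coeff (3 * m + i - 2) (g * f ^ (j - 1)) = 0) ∧
     (∀ m : ℕ, 1 ≤ m → 3 * (m - 1) + j ≤ n →
        coeff (3 * (m - 1) + j - 2) (g * f ^ (i - 1)) = 0)) := by
  constructor
  · intro H
    refine ⟨fun m hm hmn => ?_, fun m hm hmn => ?_⟩
    · have := H (3 * m + i) j (by omega) hmn (by omega) (by omega) (by omega) rfl
      rwa [max_eq_left (by omega), min_eq_right (by omega)] at this
    · have := H i (3 * (m - 1) + j) hi (by omega) (by omega) hmn rfl (by omega)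
      rwa [max_eq_right (by omega), min_eq_left (by omega)] at this
  · rintro ⟨H1, H2⟩ u v hu hun hv hvn hui hvj
    rcases lt_or_gt_of_ne (show u ≠ v by omega) with huv | hvu
    · rw [max_eq_right huv.le, min_eq_left huv.le]
      refine coeff_mul_pow_eq_zero_of_residues 3 hf n (j % 3) (i % 3) ?_ v u huv hvn hu hvj hui
      intro a b hba han hb hb3 ha hbi
      obtain rfl : b = i := by omega
      have := H2 ((a - j) / 3 + 1) (by omega) (by omega)
      rwa [show 3 * ((a - j) / 3 + 1 - 1) + j = a by omega] at this
    · rw [max_eq_left hvu.le, min_eq_right hvu.le]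
      refine coeff_mul_pow_eq_zero_of_residues 3 hf n (i % 3) (j % 3) ?_ u v hvu hun hv hui hvj
      intro a b hba han hb hb3 ha hbj
      obtain rfl : b = j := by omega
      have := H1 ((a - i) / 3) (by omega) (by omega)
      rwa [show 3 * ((a - i) / 3) + i = a by omega] at this

/-- For `n ≥ 3` and `1 ≤ i < j ≤ 3`, there are no arcs in `G_n^σ(g,f)` between any
vertex `u ∈ V_i` and any vertex `v ∈ V_j` (i.e. for all such `u, v` one has
`[z^{max(u,v)−2}] g f^{min(u,v)−1} = 0`) if and only if both
`[z^{3m+i−2}] g f^{j−1} = 0` for all `m ≥ 1` with `3m+i ≤ n`, and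
`[z^{3(m−1)+j−2}] g f^{i−1} = 0` for all `m ≥ 1` with `3(m−1)+j ≤ n`. -/
theorem no_arcs_between_parts_iff (n : ℕ) (hn : 3 ≤ n)
    (g f A : PowerSeries (ZMod 3))
    (hf : constantCoeff f = 0)
    (hA : constantCoeff A ≠ 0)
    (hfA : f = X * psComp A f)
    (i j : ℕ) (hi : 1 ≤ i) (hij : i < j) (hj : j ≤ 3) :
    (∀ u v : ℕ, 1 ≤ u → u ≤ n → 1 ≤ v → v ≤ n → u % 3 = i % 3 → v % 3 = j % 3 →
        coeff (max u v - 2) (g * f ^ (min u v - 1)) = 0) ↔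
    ((∀ m : ℕ, 1 ≤ m → 3 * m + i ≤ n →
        coeff (3 * m + i - 2) (g * f ^ (j - 1)) = 0) ∧
     (∀ m : ℕ, 1 ≤ m → 3 * (m - 1) + j ≤ n →
        coeff (3 * (m - 1) + j - 2) (g * f ^ (i - 1)) = 0)) :=
  no_arcs_between_parts_iff_general n g f hf i j hi hij hj
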